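/- Let T : V → g be a relative Rota–Baxter operator of weight 0 for a representation ρ : g → End(V), let (τ,σ) be a reflection on (V →T g, ρ), and let ℌ := {x ∈ g : σx = x}. Then W := {(u,ξ) ∈ V × Dual(g) : u ∈ range(τ + id), ξ(x) = 0 for all x ∈ ℌ} is a Lie subalgebra of V_T ⋉_{θ*} Dual(g), whose bracket is [(u,ξ),(v,η)] := ([u,v]_T, θ*(u)η − θ*(v)ξ). In particular: T((τ+id)u) ∈ ℌ for all u ∈ V; [(τ+id)u,(τ+id)v]_T ∈ range(τ+id) for all u,v ∈ V; and θ*((τ+id)u)ξ vanishes on ℌ whenever ξ vanishes on ℌ. -/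

import Mathlib

variable {K : Type*} [Field K] {g : Type*} [LieRing g] [LieAlgebra K g]
  {V : Type*} [AddCommGroup V] [Module K V]

attribute [local instance] LieRing.ofAssociativeRing

/-- `θ(u) ∈ End(g)`, `θ(u)x = ⁅Tu,x⁆ + T(ρ(x)u)`. -/
noncomputable def thetaMap (ρ : g →ₗ⁅K⁆ Module.End K V) (T : V →ₗ[K] g) (u : V) :
    g →ₗ[K] g :=
  (LieAlgebra.ad K g (T u) : g →ₗ[K] g) +
    T ∘ₗ ((ρ : g →ₗ[K] Module.End K V).flip u)

/-- `θ*(u)ξ := −ξ ∘ θ(u)`. -/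
noncomputable def thetaStar (ρ : g →ₗ⁅K⁆ Module.End K V) (T : V →ₗ[K] g) (u : V)
    (ξ : Module.Dual K g) : Module.Dual K g :=
  -(ξ ∘ₗ thetaMap ρ T u)

/-- Membership in `W = Im(τ+id) ⊕ ℌ^⊥ ⊆ V × Dual g`, where `ℌ = {x | σ x = x}`. -/
def WmemRel (σ : g ≃ₗ[K] g) (τ : V ≃ₗ[K] V) (p : V × Module.Dual K g) : Prop :=
  (∃ w : V, τ w + w = p.1) ∧ (∀ x : g, σ x = x → p.2 x = 0)

/-- For a relative Rota–Baxter operator `T : V → g` of weight 0 with a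
reflection `(τ,σ)` and `ℌ = {x | σx = x}`, the subspace
`W = {(u,ξ) : u ∈ Im(τ+id), ξ|_ℌ = 0}` is a Lie subalgebra of `V_T ⋉_{θ*} Dual g`, whose
bracket is `[(u,ξ),(v,η)] = ([u,v]_T, θ*(u)η − θ*(v)ξ)`.  In particular
`T((τ+id)u) ∈ ℌ`, `[(τ+id)u,(τ+id)v]_T ∈ Im(τ+id)`, and `θ*((τ+id)u)ξ` vanishes on `ℌ`
whenever `ξ` does. -/
theorem stmt14 (ρ : g →ₗ⁅K⁆ Module.End K V) (T : V →ₗ[K] g)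
    (hT : ∀ u v : V, T (ρ (T u) v - ρ (T v) u) = ⁅T u, T v⁆)
    (τ : V ≃ₗ[K] V) (σ : g ≃ₗ[K] g)
    (hσbr : ∀ x y : g, σ ⁅x, y⁆ = ⁅σ x, σ y⁆)
    (hrefl1 : ∀ (x : g) (v : V), τ (ρ (σ x) v) = ρ x (τ v))
    (hrefl2 : ∀ v : V, σ (T (τ v)) - T v + σ (T v) - T (τ v) = 0) :
    -- `W` is closed under the bracket of `V_T ⋉_{θ*} Dual g`
    (∀ p q : V × Module.Dual K g, WmemRel σ τ p → WmemRel σ τ q →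
      WmemRel σ τ (ρ (T p.1) q.1 - ρ (T q.1) p.1,
        thetaStar ρ T p.1 q.2 - thetaStar ρ T q.1 p.2)) ∧
    -- `T((τ+id)u) ∈ ℌ`
    (∀ u : V, σ (T (τ u + u)) = T (τ u + u)) ∧
    -- `[(τ+id)u,(τ+id)v]_T ∈ Im(τ+id)`
    (∀ u v : V, ∃ w : V,
      τ w + w = ρ (T (τ u + u)) (τ v + v) - ρ (T (τ v + v)) (τ u + u)) ∧
    -- `θ*((τ+id)u)ξ` vanishes on `ℌ` whenever `ξ` does
    (∀ (u : V) (ξ : Module.Dual K g), (∀ x : g, σ x = x → ξ x = 0) →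
      ∀ x : g, σ x = x → thetaStar ρ T (τ u + u) ξ x = 0) := by
  -- `T((τ+id)u) ∈ ℌ`
  have h2 : ∀ u : V, σ (T (τ u + u)) = T (τ u + u) := by
    intro u
    have h := hrefl2 u
    have h' : σ (T (τ u + u)) - T (τ u + u) = 0 := by
      simp only [map_add]
      rw [← h]; abel
    exact sub_eq_zero.mp h'
  -- τ commutes with ρ x for σ-fixed x
  have hcomm : ∀ x : g, σ x = x → ∀ v : V, τ (ρ x v) = ρ x (τ v) := by
    intro x hx v
    have := hrefl1 x v
    rwa [hx] at this
  have hIm : ∀ x : g, σ x = x → ∀ v : V, ρ x (τ v + v) = τ (ρ x v) + ρ x v := by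
    intro x hx v
    rw [map_add, hcomm x hx]
  -- part 3
  have h3 : ∀ u v : V, τ (ρ (T (τ u + u)) v - ρ (T (τ v + v)) u) + (ρ (T (τ u + u)) v - ρ (T (τ v + v)) u)
      = ρ (T (τ u + u)) (τ v + v) - ρ (T (τ v + v)) (τ u + u) := by
    intro u v
    rw [hIm _ (h2 u) v, hIm _ (h2 v) u, map_sub]
    abel
  -- θ((τ+id)u) x ∈ ℌ for x ∈ ℌ
  have hθ : ∀ (u : V) (x : g), σ x = x → σ (thetaMap ρ T (τ u + u) x) = thetaMap ρ T (τ u + u) x := by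
    intro u x hx
    simp only [thetaMap, LinearMap.add_apply, LinearMap.coe_comp, Function.comp_apply,
      LieAlgebra.ad_apply, LinearMap.flip_apply, LieHom.coe_toLinearMap]
    rw [map_add, hσbr, h2 u, hx, hIm x hx u, map_add, h2 (ρ x u), ← map_add]
  have h4 : ∀ (u : V) (ξ : Module.Dual K g), (∀ x : g, σ x = x → ξ x = 0) →
      ∀ x : g, σ x = x → thetaStar ρ T (τ u + u) ξ x = 0 := by
    intro u ξ hξ x hx
    simp only [thetaStar, LinearMap.neg_apply, LinearMap.coe_comp, Function.comp_apply]
    rw [hξ _ (hθ u x hx), neg_zero]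
  refine ⟨?_, h2, fun u v => ⟨_, h3 u v⟩, h4⟩
  rintro ⟨a, ξ⟩ ⟨b, η⟩ ⟨⟨w, hw⟩, hξ⟩ ⟨⟨w', hw'⟩, hη⟩
  dsimp only [WmemRel] at hw hw' hξ hη ⊢
  constructor
  · refine ⟨ρ (T a) w' - ρ (T b) w, ?_⟩
    have := h3 w w'
    rw [hw, hw'] at this
    simpa [hw, hw'] using this
  · intro x hx
    simp only [LinearMap.sub_apply]
    rw [← hw, ← hw', h4 w η hη x hx, h4 w' ξ hξ x hx]  -- order check
    abel
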